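/- Let λ be (e,i)-regular, i.e., λ has no (e,i)-hooks. Then there are no three rungs A, B, C in the same (e,i)-ladder with A strictly above B and B strictly above C (in row order) such that B ∈ [λ] while A ∉ [λ] and C ∉ [λ]. Equivalently, the intersection of [λ] with any (e,i)-ladder is an upward-closed then contiguous segment with at most one 'descent': the set of rungs of the ladder lying in [λ] forms a suffix-free pattern with no occupied rung strictly between two unoccupied rungs. -/

import Mathlib

open scoped BigOperators

/-- A partition of `n`, with parts indexed from `1`. -/
structure Ptn (n : ℕ) where
  part : ℕ → ℕ
  antitone : ∀ ⦃a b : ℕ⦄, 1 ≤ a → a ≤ b → part b ≤ part a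
  bounded : ∀ a : ℕ, n < a → part a = 0
  total : ∑ a ∈ Finset.Icc 1 n, part a = n

namespace Ptn

/-- `(a,b)` is a node of the Young diagram of `lam`. -/
def cell {n : ℕ} (lam : Ptn n) (x : ℕ × ℕ) : Prop :=
  1 ≤ x.1 ∧ 1 ≤ x.2 ∧ x.2 ≤ lam.part x.1

/-- leg length of the node `x`. -/
noncomputable def legLen {n : ℕ} (lam : Ptn n) (x : ℕ × ℕ) : ℕ :=
  Set.ncard {a : ℕ | x.1 < a ∧ x.2 ≤ lam.part a}

/-- hook length of the node `x`. -/
noncomputable def hookLen {n : ℕ} (lam : Ptn n) (x : ℕ × ℕ) : ℕ :=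
  (lam.part x.1 - x.2) + legLen lam x + 1

/-- `x` is an `(e,i)`-hook of `lam`. -/
def IsHook (e i : ℕ) {n : ℕ} (lam : Ptn n) (x : ℕ × ℕ) : Prop :=
  cell lam x ∧ e ∣ hookLen lam x ∧ hookLen lam x * (e - i) = e * legLen lam x

def HasHook (e i : ℕ) {n : ℕ} (lam : Ptn n) : Prop := ∃ x : ℕ × ℕ, IsHook e i lam x

end Ptn

/-- `x` and `y` lie in the same `(e,i)`-ladder. -/
def SameLadder (e i : ℕ) (x y : ℕ × ℕ) : Prop :=
  (e - i) * x.2 + x.1 * i = (e - i) * y.2 + y.1 * i ∧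
  ((x.2 : ℤ) - (x.1 : ℤ)) ≡ ((y.2 : ℤ) - (y.1 : ℤ)) [ZMOD (e : ℤ)]

/-- `lam` and `mu` are in the same `(e,i)`-regularisation class. -/
def SameClass (e i : ℕ) {n : ℕ} (lam mu : Ptn n) : Prop :=
  ∀ x : ℕ × ℕ,
    Set.ncard {y : ℕ × ℕ | lam.cell y ∧ SameLadder e i x y}
      = Set.ncard {y : ℕ × ℕ | mu.cell y ∧ SameLadder e i x y}

/-- dominance order: `mu` dominates `lam`. -/
def Dominates {n : ℕ} (mu lam : Ptn n) : Prop :=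
  ∀ j : ℕ, ∑ k ∈ Finset.Icc 1 j, lam.part k ≤ ∑ k ∈ Finset.Icc 1 j, mu.part k

/-- `mu` is obtained from `lam` by moving some nodes strictly upwards in their
`(e,i)`-ladders. -/
def MovedUp (e i : ℕ) {n : ℕ} (lam mu : Ptn n) : Prop :=
  mu ≠ lam ∧ SameClass e i lam mu ∧
  ∃ f : ℕ × ℕ → ℕ × ℕ,
    Set.BijOn f {x : ℕ × ℕ | mu.cell x ∧ ¬ lam.cell x}
      {y : ℕ × ℕ | lam.cell y ∧ ¬ mu.cell y} ∧
    ∀ x : ℕ × ℕ, mu.cell x → ¬ lam.cell x →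
      SameLadder e i x (f x) ∧ x.1 < (f x).1

/-- position `t` is occupied in the `s`-bead abacus display of `lam`. -/
def Occupied {n : ℕ} (lam : Ptn n) (s t : ℕ) : Prop :=
  ∃ k : ℕ, 1 ≤ k ∧ k ≤ s ∧ t = lam.part k + s - k

/-! On the abacus of `λ`, with beads at the positions `λ_a - a`, a node `(r, c)` lies in `[λ]` iff
at least `r` beads sit at positions `≥ c - r`, and climbing one rung of an `(e,i)`-ladder lowers
the row by `e - i` and raises `c - r` by `e`. Hence `B ∈ [λ]`, `A ∉ [λ]` force some window of `e`
consecutive positions above `c - r` of `B` to hold more than `e - i` beads, and `C ∉ [λ]` forces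
one below it to hold fewer. Sliding the window changes its count by at most one, so in between
there is a window starting at a gap, ending at a bead and holding exactly `e - i` beads strictly
inside: a removable rim hook of length `e` and leg length `e - i`, i.e. an `(e,i)`-hook. -/

lemma sub_add_mul_eq_sum_range (f : ℤ → ℤ) (v d : ℤ) (k : ℕ) :
    f v - f (v + k * d) = ∑ j ∈ Finset.range k, (f (v + j * d) - f (v + j * d + d)) := by
  have := Finset.sum_range_sub' (fun j : ℕ => f (v + j * d)) k
  simp only [Nat.cast_add, Nat.cast_one, add_one_mul, ← add_assoc, Nat.cast_zero, zero_mul,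
    add_zero] at this
  exact this.symm

lemma exists_le_lt_sub_add_of_mul_lt_sub {f : ℤ → ℤ} {v d ρ : ℤ} {k : ℕ} (hd : 0 ≤ d)
    (h : k * ρ < f v - f (v + k * d)) : ∃ u, v ≤ u ∧ ρ < f u - f (u + d) := by
  have hconst : (k : ℤ) * ρ = ∑ _j ∈ Finset.range k, ρ := by simp
  rw [sub_add_mul_eq_sum_range, hconst] at h
  obtain ⟨j, -, hj⟩ := Finset.exists_lt_of_sum_lt h
  exact ⟨v + j * d, le_add_of_nonneg_right (by positivity), hj⟩

lemma exists_add_le_sub_lt_of_sub_lt_mul {f : ℤ → ℤ} {v d ρ : ℤ} {k : ℕ} (hd : 0 ≤ d)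
    (h : f (v - k * d) - f v < k * ρ) : ∃ u, u + d ≤ v ∧ f u - f (u + d) < ρ := by
  have hconst : (k : ℤ) * ρ = ∑ _j ∈ Finset.range k, ρ := by simp
  have hsum := sub_add_mul_eq_sum_range f (v - k * d) d k
  rw [sub_add_cancel] at hsum
  rw [hsum, hconst] at h
  obtain ⟨j, hj, hlt⟩ := Finset.exists_lt_of_sum_lt h
  refine ⟨v - k * d + j * d, ?_, hlt⟩
  have : ((j : ℤ) + 1) * d ≤ k * d :=
    mul_le_mul_of_nonneg_right (by exact_mod_cast Finset.mem_range.1 hj) hd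
  linarith

lemma Int.exists_le_lt_add_one {D : ℤ → ℤ} {ρ a b : ℤ} (hab : a ≤ b) (ha : D a ≤ ρ)
    (hb : ρ < D b) : ∃ g, D g ≤ ρ ∧ ρ < D (g + 1) := by
  induction b, hab using Int.leInduction with
  | base => omega
  | succ b _ ih =>
    by_cases hρ : ρ < D b
    · exact ih hρ
    · exact ⟨b, not_lt.1 hρ, hb⟩

namespace Ptn

variable {n : ℕ} (lam : Ptn n)

/-- The abacus of `lam` has a bead at each position `beta a = λ_a - a` (`a ≥ 1`); these are
pairwise distinct, and `beadCount lam v` counts the beads at positions `≥ v`. -/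
def beta (a : ℕ) : ℤ := lam.part a - a

noncomputable def beadCount (v : ℤ) : ℕ :=
  ({a ∈ Finset.Icc 1 (n + v.natAbs) | v ≤ lam.beta a} : Finset ℕ).card

lemma beta_le_beta_of_le {a b : ℕ} (ha : 1 ≤ a) (hab : a ≤ b) : lam.beta b ≤ lam.beta a := by
  have := lam.antitone ha hab
  unfold beta
  omega

lemma le_beadCount_iff {a : ℕ} (ha : 1 ≤ a) (v : ℤ) : a ≤ lam.beadCount v ↔ v ≤ lam.beta a := by
  constructor
  · intro h
    by_contra hv
    have hsub : {r ∈ Finset.Icc 1 (n + v.natAbs) | v ≤ lam.beta r} ⊆ Finset.Icc 1 (a - 1) := by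
      intro r hr
      simp only [Finset.mem_filter, Finset.mem_Icc] at hr ⊢
      have : ¬ a ≤ r := fun har => hv (hr.2.trans (lam.beta_le_beta_of_le ha har))
      omega
    have := Finset.card_le_card hsub
    rw [Nat.card_Icc] at this
    unfold beadCount at h
    omega
  · intro h
    have hsub : Finset.Icc 1 a ⊆ {r ∈ Finset.Icc 1 (n + v.natAbs) | v ≤ lam.beta r} := by
      intro r hr
      rw [Finset.mem_Icc] at hr
      have hvr : v ≤ lam.beta r := h.trans (lam.beta_le_beta_of_le hr.1 hr.2)
      refine Finset.mem_filter.2 ⟨Finset.mem_Icc.2 ⟨hr.1, ?_⟩, hvr⟩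
      by_contra hrn
      have : lam.part r = 0 := lam.bounded r (by omega)
      unfold beta at hvr
      omega
    have := Finset.card_le_card hsub
    rw [Nat.card_Icc] at this
    exact this

lemma beadCount_antitone : Antitone lam.beadCount := by
  intro v w hvw
  rcases Nat.eq_zero_or_pos (lam.beadCount w) with h | h
  · omega
  · exact (lam.le_beadCount_iff h v).2 (hvw.trans ((lam.le_beadCount_iff h w).1 le_rfl))

lemma beadCount_le_beadCount_add_one_add_one (v : ℤ) :
    lam.beadCount v ≤ lam.beadCount (v + 1) + 1 := by
  set s := lam.beadCount (v + 1)
  by_contra! hs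
  have h1 : v ≤ lam.beta (s + 1) := (lam.le_beadCount_iff (by omega) v).1 (by omega)
  have h2 : v ≤ lam.beta (s + 2) := (lam.le_beadCount_iff (by omega) v).1 (by omega)
  have h3 : ¬ v + 1 ≤ lam.beta (s + 1) := by
    rw [← lam.le_beadCount_iff (by omega)]
    omega
  have := lam.antitone (a := s + 1) (b := s + 2) (by omega) (by omega)
  unfold beta at h1 h2 h3
  omega

/-- Rows `1, …, -v` all have `beta ≥ v`, since `λ_a ≥ 0`. -/
lemma neg_le_beadCount (v : ℤ) : -v ≤ lam.beadCount v := by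
  by_contra! h
  have hq : 1 ≤ (-v).toNat := by omega
  have := (lam.le_beadCount_iff hq v).2 (by unfold beta; omega)
  omega

lemma cell_iff_le_beadCount {x : ℕ × ℕ} (h1 : 1 ≤ x.1) (h2 : 1 ≤ x.2) :
    lam.cell x ↔ x.1 ≤ lam.beadCount ((x.2 : ℤ) - x.1) := by
  rw [lam.le_beadCount_iff h1, cell, beta]
  omega

lemma legLen_eq_sub {a b c : ℕ} (hb : c ≤ lam.part b) (hb1 : lam.part (b + 1) < c) :
    lam.legLen (a, c) = b - a := by
  have hset : {r : ℕ | (a, c).1 < r ∧ (a, c).2 ≤ lam.part r} = Set.Ioc a b := by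
    ext r
    simp only [Set.mem_ofPred_eq, Set.mem_Ioc, and_congr_right_iff]
    intro har
    constructor
    · intro hr
      by_contra! hbr
      have := lam.antitone (a := b + 1) (b := r) (by omega) hbr
      omega
    · intro hrb
      exact hb.trans (lam.antitone (by omega) hrb)
  rw [legLen, hset, ← Finset.coe_Ioc, Set.ncard_coe_finset, Nat.card_Ioc]

/-- Sliding a window of length `h` one step changes its bead count by at most one, so where the
count first exceeds `ρ` the window has just lost a gap and gained a bead. -/
lemma exists_gap_and_bead_of_le_lt (h : ℕ) {ρ a b : ℤ} (hab : a ≤ b)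
    (ha : (lam.beadCount a : ℤ) - lam.beadCount (a + h) ≤ ρ)
    (hb : ρ < (lam.beadCount b : ℤ) - lam.beadCount (b + h)) :
    ∃ g, lam.beadCount g = lam.beadCount (g + 1) ∧
      lam.beadCount (g + h) = lam.beadCount (g + h + 1) + 1 ∧
      (lam.beadCount (g + 1) : ℤ) - lam.beadCount (g + h) = ρ := by
  obtain ⟨g, hg, hg1⟩ := Int.exists_le_lt_add_one
    (D := fun u => (lam.beadCount u : ℤ) - lam.beadCount (u + h)) hab ha hb
  simp only [add_right_comm g 1] at hg hg1
  have := lam.beadCount_le_beadCount_add_one_add_one (g + h)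
  have := lam.beadCount_antitone (Int.le_add_one (le_refl g))
  exact ⟨g, by omega, by omega, by omega⟩

/-- A bead at position `g + h` above a gap at position `g` is a removable rim hook of length `h`;
its leg length is the number of beads strictly between the two positions. -/
lemma exists_hookLen_eq_of_gap_of_bead {g : ℤ} {h : ℕ}
    (hgap : lam.beadCount g = lam.beadCount (g + 1))
    (hbead : lam.beadCount (g + h) = lam.beadCount (g + h + 1) + 1) :
    ∃ x, lam.cell x ∧ lam.legLen x + lam.beadCount (g + h) = lam.beadCount (g + 1) ∧
      lam.hookLen x = h := by
  have hh : 1 ≤ h := by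
    by_contra! h0
    simp only [Nat.lt_one_iff.1 h0, Nat.cast_zero, add_zero] at hbead
    omega
  set a := lam.beadCount (g + h)
  set b := lam.beadCount (g + 1)
  have ha : 1 ≤ a := by omega
  have hab : a ≤ b := lam.beadCount_antitone (by omega)
  have hβa : lam.beta a = g + h := by
    have := (lam.le_beadCount_iff ha _).1 le_rfl
    have := (lam.le_beadCount_iff ha (g + h + 1)).not.1 (by omega)
    omega
  have hβb : g + 1 ≤ lam.beta b := (lam.le_beadCount_iff (by omega) _).1 le_rfl
  have hβb1 : lam.beta (b + 1) < g := by
    have := (lam.le_beadCount_iff (by omega : 1 ≤ b + 1) g).not.1 (by omega)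
    omega
  obtain ⟨c, hc⟩ := Int.eq_ofNat_of_zero_le (by have := lam.neg_le_beadCount g; omega :
    0 ≤ g + b + 1)
  have hpart := lam.antitone ha hab
  unfold beta at hβa hβb hβb1
  have hleg := lam.legLen_eq_sub (a := a) (b := b) (c := c) (by omega) (by omega)
  refine ⟨(a, c), ⟨ha, by omega, by dsimp only; omega⟩, by omega, ?_⟩
  rw [hookLen, hleg]
  dsimp only
  omega

end Ptn

lemma SameLadder.exists_of_fst_lt {e i : ℕ} (hie : i < e) {x y : ℕ × ℕ}
    (h : SameLadder e i x y) (hlt : x.1 < y.1) :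
    ∃ k : ℕ, (y.1 : ℤ) = x.1 + k * ((e : ℤ) - i) ∧
      (x.2 : ℤ) - x.1 = (y.2 : ℤ) - y.1 + k * e := by
  obtain ⟨hslope, hmod⟩ := h
  obtain ⟨K, hK⟩ := hmod.symm.dvd
  have hslope' : ((e : ℤ) - i) * x.2 + x.1 * i = ((e : ℤ) - i) * y.2 + y.1 * i := by
    rw [← Nat.cast_sub hie.le]
    exact_mod_cast hslope
  have hcol : (e : ℤ) * ((x.2 : ℤ) - y.2 - i * K) = 0 := by linear_combination hslope' + i * hK
  have hcol' : (x.2 : ℤ) - y.2 = i * K := by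
    have := (mul_eq_zero.1 hcol).resolve_left (by omega)
    linarith
  have hrow : (y.1 : ℤ) - x.1 = ((e : ℤ) - i) * K := by linear_combination hK - hcol'
  have hK : 0 ≤ K := by
    by_contra! hK
    nlinarith [show (i : ℤ) < e by exact_mod_cast hie, show (x.1 : ℤ) < y.1 by exact_mod_cast hlt]
  obtain ⟨k, rfl⟩ := Int.eq_ofNat_of_zero_le hK
  exact ⟨k, by linarith, by linarith⟩

theorem stmt13_general (e i n : ℕ) (hie : i < e)
    (lam : Ptn n) (hreg : ¬ Ptn.HasHook e i lam) :
    ¬ ∃ A B C : ℕ × ℕ, 0 < A.1 ∧ 0 < A.2 ∧ 0 < C.1 ∧ 0 < C.2 ∧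
        SameLadder e i A B ∧ SameLadder e i B C ∧
        A.1 < B.1 ∧ B.1 < C.1 ∧
        lam.cell B ∧ ¬ lam.cell A ∧ ¬ lam.cell C := by
  rintro ⟨A, B, C, hA1, hA2, hC1, hC2, hAB, hBC, hAB1, hBC1, hB, hA, hC⟩
  obtain ⟨k, hkrow, hkcont⟩ := hAB.exists_of_fst_lt hie hAB1
  obtain ⟨m, hmrow, hmcont⟩ := hBC.exists_of_fst_lt hie hBC1
  set v : ℤ := (B.2 : ℤ) - B.1
  have hB' : (B.1 : ℤ) ≤ lam.beadCount v :=
    Nat.cast_le.2 ((lam.cell_iff_le_beadCount hB.1 hB.2.1).1 hB)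
  have hA' : (lam.beadCount (v + k * e) : ℤ) < A.1 := by
    rw [lam.cell_iff_le_beadCount hA1 hA2, hkcont] at hA
    exact Nat.cast_lt.2 (not_le.1 hA)
  have hC' : (lam.beadCount (v - m * e) : ℤ) < C.1 := by
    rw [lam.cell_iff_le_beadCount hC1 hC2, show (C.2 : ℤ) - C.1 = v - m * e by linarith] at hC
    exact Nat.cast_lt.2 (not_le.1 hC)
  obtain ⟨up, hvup, hup⟩ := exists_le_lt_sub_add_of_mul_lt_sub
    (f := fun u => lam.beadCount u) (v := v) (ρ := e - i) (k := k) (Int.natCast_nonneg e)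
    (by linarith)
  obtain ⟨um, humv, hdown⟩ := exists_add_le_sub_lt_of_sub_lt_mul
    (f := fun u => lam.beadCount u) (v := v) (ρ := e - i) (k := m) (Int.natCast_nonneg e)
    (by linarith)
  obtain ⟨g, hgap, hbead, hcount⟩ := lam.exists_gap_and_bead_of_le_lt e (by omega) hdown.le hup
  obtain ⟨x, hx, hleg, hhook⟩ := lam.exists_hookLen_eq_of_gap_of_bead hgap hbead
  have hleg' : lam.legLen x = e - i := by omega
  exact hreg ⟨x, hx, hhook ▸ dvd_rfl, by rw [hhook, hleg']⟩

theorem stmt13 (e i n : ℕ) (he : 2 ≤ e) (hi : 0 < i) (hie : i < e)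
    (lam : Ptn n) (hreg : ¬ Ptn.HasHook e i lam) :
    ¬ ∃ A B C : ℕ × ℕ, 0 < A.1 ∧ 0 < A.2 ∧ 0 < C.1 ∧ 0 < C.2 ∧
        SameLadder e i A B ∧ SameLadder e i B C ∧
        A.1 < B.1 ∧ B.1 < C.1 ∧
        lam.cell B ∧ ¬ lam.cell A ∧ ¬ lam.cell C :=
  stmt13_general e i n hie lam hreg
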